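/- With b_n^i and p_n as above, the elements h_n^i = b_n^i − p_n(1-qⁿ)/(1-q^{rn}) satisfy the sl_r-type Heisenberg relations: for n > 0, [h_{-n}^i, h_n^j] = n(1-q₁ⁿ)(1-q₂ⁿ)·(1 − q^{(rδ_{ij}−1)n})/(1 − q^{rn})·q^{rn·[i>j]}, and ∑_{i=1}^{r} h_n^i q^{n(i-1)} = 0 for all n ≠ 0. -/

import Mathlib

/-!
Put `u = qⁿ`, `x_k = b_{-n}^k`, `y_l = b_n^l`, `N = ∑ u^{-k} x_k`, `P = ∑ u^l y_l` and
`β(v) = (1 - v)/(1 - v^r)`, so that `h_{-n}^i = x_i - β(u⁻¹) N` and `h_n^j = y_j - β(u) P`.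
With `K = n(1-q₁ⁿ)(1-q₂ⁿ)`, two telescoping sums give `[x_i, P] = K u^{r-1}` and `[N, y_j] = K`,
hence `[N, P] = K ∑ u^l`. Because `β(u) ∑ u^l = 1`, the two terms of the commutator involving `N`
cancel and `[h_{-n}^i, h_n^j] = K (c_{ij} - β(u) u^{r-1})`, where `[x_k, y_l] = K c_{kl}`; a case
split on `i < j`, `i = j`, `i > j` identifies this with the stated value. The same identity
`β(v) ∑ v^l = 1` makes `∑ v^i h^i = P - P` vanish.
-/

open Finset

section Telescoping

variable {F : Type*} [Field F]

lemma sum_range_pow_mul_ite_lt (u : F) (hu : u ≠ 0) {a r : ℕ} (ha : a < r) :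
    ∑ l ∈ range r, u ^ l * (if a < l then 1 - u⁻¹ else if a = l then 1 else 0) =
      u ^ (r - 1) := by
  induction r, ha using Nat.le_induction with
  | base =>
    rw [sum_range_succ, sum_eq_zero fun l hl => by
      rw [if_neg (by simp at hl; omega), if_neg (by simp at hl; omega), mul_zero]]
    simp
  | succ r har ih =>
    obtain ⟨s, rfl⟩ : ∃ s, r = s + 1 := ⟨r - 1, by omega⟩
    rw [sum_range_succ, ih, if_pos (by omega), Nat.add_sub_cancel, Nat.add_sub_cancel]
    field_simp
    ring

lemma sum_range_pow_mul_ite_gt (w : F) {a r : ℕ} (ha : a < r) :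
    ∑ k ∈ range r, w ^ k * (if k < a then 1 - w else if k = a then 1 else 0) = 1 := by
  induction r, ha using Nat.le_induction with
  | base =>
    rw [sum_range_succ, sum_congr rfl fun k hk => by rw [if_pos (mem_range.1 hk)],
      ← sum_mul, geom_sum_mul_neg]
    simp
  | succ r har ih =>
    rw [sum_range_succ, ih, if_neg (by omega), if_neg (by omega), mul_zero, add_zero]

end Telescoping

section TracelessPart

variable {F A : Type*} [Field F] [Ring A] [Algebra F A] {r : ℕ}

/-- `[b_{-n}^k, b_n^l] = n(1-q₁ⁿ)(1-q₂ⁿ) · glCoeff qⁿ k l`. -/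
def glCoeff (u : F) (k l : Fin r) : F :=
  if k < l then 1 - u⁻¹ else if k = l then 1 else 0

lemma sum_pow_mul_glCoeff {u : F} (hu : u ≠ 0) (k : Fin r) :
    ∑ l : Fin r, u ^ (l : ℕ) * glCoeff u k l = u ^ (r - 1) := by
  simp only [glCoeff, Fin.lt_def, Fin.ext_iff]
  exact (Fin.sum_univ_eq_sum_range
    (fun l => u ^ l * if (k : ℕ) < l then 1 - u⁻¹ else if (k : ℕ) = l then 1 else 0) r).trans
    (sum_range_pow_mul_ite_lt u hu k.isLt)

lemma sum_inv_pow_mul_glCoeff (u : F) (l : Fin r) :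
    ∑ k : Fin r, u⁻¹ ^ (k : ℕ) * glCoeff u k l = 1 := by
  simp only [glCoeff, Fin.lt_def, Fin.ext_iff]
  exact (Fin.sum_univ_eq_sum_range
    (fun k => u⁻¹ ^ k * if k < (l : ℕ) then 1 - u⁻¹ else if k = (l : ℕ) then 1 else 0) r).trans
    (sum_range_pow_mul_ite_gt u⁻¹ l.isLt)

lemma sum_pow_mul_div_eq_one {v : F} (hv : v ≠ 1) (hvr : v ^ r ≠ 1) :
    (∑ l : Fin r, v ^ (l : ℕ)) * ((1 - v) / (1 - v ^ r)) = 1 := by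
  rw [Fin.sum_univ_eq_sum_range (v ^ ·), geom_sum_eq hv, div_mul_div_comm,
    div_eq_one_iff_eq (mul_ne_zero (sub_ne_zero.2 hv) (sub_ne_zero.2 hvr.symm))]
  ring

variable (F A) in
def commutatorₗ : A →ₗ[F] A →ₗ[F] A :=
  LinearMap.mul F A - (LinearMap.mul F A).flip

lemma commutatorₗ_apply (x y : A) : commutatorₗ F A x y = x * y - y * x := rfl

/-- `h_m^i` for the family `y = b_m`, with the paper's `q^{m(i-1)}` written `q^{m i}` since
`Fin r` is `0`-based. -/
def tracelessPart (q : F) (m : ℤ) (y : Fin r → A) (i : Fin r) : A :=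
  y i - algebraMap F A ((1 - q ^ m) / (1 - q ^ ((r : ℤ) * m))) *
    ∑ l : Fin r, algebraMap F A (q ^ (m * (l : ℤ))) * y l

lemma tracelessPart_eq_smul (q : F) (m : ℤ) (y : Fin r → A) (i : Fin r) :
    tracelessPart q m y i =
      y i - ((1 - q ^ m) / (1 - (q ^ m) ^ r)) • ∑ l : Fin r, (q ^ m) ^ (l : ℕ) • y l := by
  simp only [tracelessPart, Algebra.smul_def, mul_comm (r : ℤ) m, zpow_mul, zpow_natCast]

lemma sum_zpow_mul_tracelessPart {q : F} {m : ℤ} (hm : q ^ m ≠ 1)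
    (hrm : q ^ ((r : ℤ) * m) ≠ 1) (y : Fin r → A) :
    ∑ i : Fin r, algebraMap F A (q ^ (m * (i : ℤ))) * tracelessPart q m y i = 0 := by
  rw [mul_comm, zpow_mul, zpow_natCast] at hrm
  simp only [tracelessPart_eq_smul, ← Algebra.smul_def, smul_sub, sum_sub_distrib, smul_smul,
    ← sum_smul, zpow_mul, zpow_natCast]
  rw [← sum_mul, sum_pow_mul_div_eq_one hm hrm, one_smul, sub_self]

lemma glCoeff_sub_eq {u : F} (hu : u ≠ 0) (hur : u ^ r ≠ 1) (i j : Fin r) :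
    glCoeff u i j - (1 - u) / (1 - u ^ r) * u ^ (r - 1) =
      (1 - u ^ ((if i = j then (r : ℤ) else 0) - 1)) / (1 - u ^ r) *
        (if j < i then u ^ r else 1) := by
  obtain ⟨s, rfl⟩ : ∃ s, r = s + 1 := ⟨r - 1, by have := i.pos; omega⟩
  have hD : 1 - u ^ (s + 1) ≠ 0 := sub_ne_zero.2 hur.symm
  rw [Nat.add_sub_cancel]
  rcases lt_trichotomy i j with hij | rfl | hij
  · rw [glCoeff, if_pos hij, if_neg hij.ne, if_neg hij.not_gt, zero_sub (1 : ℤ), zpow_neg_one]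
    field_simp
    ring
  · rw [glCoeff, if_neg (lt_irrefl i), if_pos rfl, if_pos rfl, if_neg (lt_irrefl i),
      Nat.cast_succ, add_sub_cancel_right, zpow_natCast]
    field_simp
    ring
  · rw [glCoeff, if_neg hij.not_gt, if_neg hij.ne', if_neg hij.ne', if_pos hij, zero_sub (1 : ℤ),
      zpow_neg_one]
    field_simp
    ring

theorem tracelessPart_commutator {q : F} (hq : q ≠ 0) {n : ℕ} (hn : q ^ (n : ℤ) ≠ 1)
    (hrn : q ^ ((r : ℤ) * n) ≠ 1) {K : F} {x y : Fin r → A}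
    (hxy : ∀ k l, x k * y l - y l * x k = algebraMap F A (K * glCoeff (q ^ n) k l))
    (i j : Fin r) :
    tracelessPart q (-n) x i * tracelessPart q n y j -
        tracelessPart q n y j * tracelessPart q (-n) x i =
      algebraMap F A (K * (1 - q ^ (((if i = j then (r : ℤ) else 0) - 1) * (n : ℤ))) /
        (1 - q ^ ((r : ℤ) * (n : ℤ))) * (if j < i then q ^ ((r : ℤ) * (n : ℤ)) else 1)) := by
  rw [tracelessPart_eq_smul, tracelessPart_eq_smul, ← commutatorₗ_apply (F := F), zpow_neg,
    zpow_natCast]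
  rw [zpow_natCast] at hn
  set u := q ^ n
  have hu : u ≠ 0 := pow_ne_zero n hq
  have hur : u ^ r = q ^ ((r : ℤ) * n) := by rw [mul_comm, zpow_mul, zpow_natCast, zpow_natCast]
  have hxy' : ∀ k l, commutatorₗ F A (x k) (y l) = algebraMap F A (K * glCoeff u k l) := hxy
  set N := ∑ k : Fin r, u⁻¹ ^ (k : ℕ) • x k with hN
  set P := ∑ l : Fin r, u ^ (l : ℕ) • y l with hP
  have hxP : commutatorₗ F A (x i) P = algebraMap F A (K * u ^ (r - 1)) := by
    simp only [hP, map_sum, map_smul, hxy']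
    simp only [Algebra.smul_def, ← map_mul, ← map_sum, mul_left_comm _ K, ← mul_sum,
      sum_pow_mul_glCoeff hu]
  have hNy : ∀ l, commutatorₗ F A N (y l) = algebraMap F A K := by
    intro l
    simp only [hN, LinearMap.map_sum₂, LinearMap.map_smul₂, hxy']
    simp only [Algebra.smul_def, ← map_mul, ← map_sum, mul_left_comm _ K, ← mul_sum,
      sum_inv_pow_mul_glCoeff, mul_one]
  have hNP : commutatorₗ F A N P = algebraMap F A (K * ∑ l : Fin r, u ^ (l : ℕ)) := by
    simp only [hP, map_sum, map_smul, hNy]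
    simp only [Algebra.smul_def, ← map_mul, ← map_sum, mul_sum, mul_comm]
  simp only [map_sub, map_smul, LinearMap.sub_apply, LinearMap.smul_apply, hxy', hxP, hNy, hNP]
  simp only [Algebra.smul_def, ← map_mul, ← map_sub]
  congr 1
  rw [← hur, mul_comm _ (n : ℤ), zpow_mul, zpow_natCast]
  linear_combination K * glCoeff_sub_eq hu (hur ▸ hrn) i j +
    (1 - u⁻¹) / (1 - u⁻¹ ^ r) * K * sum_pow_mul_div_eq_one (r := r) hn (hur ▸ hrn)

end TracelessPart

theorem h_relations_general {F : Type*} [Field F] {A : Type*} [Ring A] [Algebra F A]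
    (q₁ q₂ : F) (hq0 : q₁ * q₂ ≠ 0) (hgen : ∀ n : ℤ, n ≠ 0 → (q₁ * q₂) ^ n ≠ 1)
    (r : ℕ) (hr : 0 < r) (b : Fin r → ℤ → A)
    (hrel : ∀ (i j : Fin r) (n : ℕ), 0 < n →
      b i (-(n : ℤ)) * b j (n : ℤ) - b j (n : ℤ) * b i (-(n : ℤ)) =
        algebraMap F A ((n : F) * (1 - q₁ ^ n) * (1 - q₂ ^ n) *
          (if i < j then 1 - ((q₁ * q₂) ^ n)⁻¹ else if i = j then 1 else 0))) :
    (∀ (n : ℕ), 0 < n → ∀ (i j : Fin r),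
      (fun (l : Fin r) (m : ℤ) =>
          b l m - algebraMap F A ((1 - (q₁ * q₂) ^ m) / (1 - (q₁ * q₂) ^ ((r : ℤ) * m))) *
            ∑ l' : Fin r, algebraMap F A ((q₁ * q₂) ^ (m * (l' : ℤ))) * b l' m)
          i (-(n : ℤ)) *
        (fun (l : Fin r) (m : ℤ) =>
          b l m - algebraMap F A ((1 - (q₁ * q₂) ^ m) / (1 - (q₁ * q₂) ^ ((r : ℤ) * m))) *
            ∑ l' : Fin r, algebraMap F A ((q₁ * q₂) ^ (m * (l' : ℤ))) * b l' m)
          j (n : ℤ) -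
        (fun (l : Fin r) (m : ℤ) =>
          b l m - algebraMap F A ((1 - (q₁ * q₂) ^ m) / (1 - (q₁ * q₂) ^ ((r : ℤ) * m))) *
            ∑ l' : Fin r, algebraMap F A ((q₁ * q₂) ^ (m * (l' : ℤ))) * b l' m)
          j (n : ℤ) *
        (fun (l : Fin r) (m : ℤ) =>
          b l m - algebraMap F A ((1 - (q₁ * q₂) ^ m) / (1 - (q₁ * q₂) ^ ((r : ℤ) * m))) *
            ∑ l' : Fin r, algebraMap F A ((q₁ * q₂) ^ (m * (l' : ℤ))) * b l' m)
          i (-(n : ℤ)) =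
      algebraMap F A ((n : F) * (1 - q₁ ^ n) * (1 - q₂ ^ n) *
        (1 - (q₁ * q₂) ^ (((if i = j then (r : ℤ) else 0) - 1) * (n : ℤ))) /
          (1 - (q₁ * q₂) ^ ((r : ℤ) * (n : ℤ))) *
        (if j < i then (q₁ * q₂) ^ ((r : ℤ) * (n : ℤ)) else 1))) ∧
    (∀ (n : ℤ), n ≠ 0 →
      ∑ i : Fin r, algebraMap F A ((q₁ * q₂) ^ (n * (i : ℤ))) *
        (b i n - algebraMap F A ((1 - (q₁ * q₂) ^ n) / (1 - (q₁ * q₂) ^ ((r : ℤ) * n))) *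
          ∑ l' : Fin r, algebraMap F A ((q₁ * q₂) ^ (n * (l' : ℤ))) * b l' n) = 0) := by
  have hr' : (r : ℤ) ≠ 0 := by omega
  refine ⟨fun n hn i j => ?_, fun n hn => ?_⟩
  · have hn' : (n : ℤ) ≠ 0 := by omega
    exact tracelessPart_commutator hq0 (hgen n hn') (hgen _ (mul_ne_zero hr' hn'))
      (hrel · · n hn) i j
  · exact sum_zpow_mul_tracelessPart (hgen n hn) (hgen _ (mul_ne_zero hr' hn)) _

/-- In the gl_r deformed Heisenberg algebra, the elements
`h_n^i = b_n^i - p_n (1-qⁿ)/(1-q^{rn})` (with `p_n = ∑_i b_n^i q^{n(i-1)}`) satisfy the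
sl_r-type Heisenberg relations: for `n > 0`,
`[h_{-n}^i, h_n^j] = n(1-q₁ⁿ)(1-q₂ⁿ)(1-q^{(rδ_{ij}-1)n})/(1-q^{rn})·q^{rn·[i>j]}`,
and `∑_i h_n^i q^{n(i-1)} = 0` for all `n ≠ 0`. -/
theorem h_relations {F : Type*} [Field F] {A : Type*} [Ring A] [Algebra F A]
    (q₁ q₂ : F) (hq0 : q₁ * q₂ ≠ 0) (hgen : ∀ n : ℤ, n ≠ 0 → (q₁ * q₂) ^ n ≠ 1)
    (r : ℕ) (hr : 0 < r) (b : Fin r → ℤ → A)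
    (hcomm : ∀ (i j : Fin r) (m n : ℤ), m ≠ 0 → n ≠ 0 → m + n ≠ 0 →
      b i m * b j n = b j n * b i m)
    (hrel : ∀ (i j : Fin r) (n : ℕ), 0 < n →
      b i (-(n : ℤ)) * b j (n : ℤ) - b j (n : ℤ) * b i (-(n : ℤ)) =
        algebraMap F A ((n : F) * (1 - q₁ ^ n) * (1 - q₂ ^ n) *
          (if i < j then 1 - ((q₁ * q₂) ^ n)⁻¹ else if i = j then 1 else 0))) :
    (∀ (n : ℕ), 0 < n → ∀ (i j : Fin r),
      (fun (l : Fin r) (m : ℤ) =>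
          b l m - algebraMap F A ((1 - (q₁ * q₂) ^ m) / (1 - (q₁ * q₂) ^ ((r : ℤ) * m))) *
            ∑ l' : Fin r, algebraMap F A ((q₁ * q₂) ^ (m * (l' : ℤ))) * b l' m)
          i (-(n : ℤ)) *
        (fun (l : Fin r) (m : ℤ) =>
          b l m - algebraMap F A ((1 - (q₁ * q₂) ^ m) / (1 - (q₁ * q₂) ^ ((r : ℤ) * m))) *
            ∑ l' : Fin r, algebraMap F A ((q₁ * q₂) ^ (m * (l' : ℤ))) * b l' m)
          j (n : ℤ) -
        (fun (l : Fin r) (m : ℤ) =>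
          b l m - algebraMap F A ((1 - (q₁ * q₂) ^ m) / (1 - (q₁ * q₂) ^ ((r : ℤ) * m))) *
            ∑ l' : Fin r, algebraMap F A ((q₁ * q₂) ^ (m * (l' : ℤ))) * b l' m)
          j (n : ℤ) *
        (fun (l : Fin r) (m : ℤ) =>
          b l m - algebraMap F A ((1 - (q₁ * q₂) ^ m) / (1 - (q₁ * q₂) ^ ((r : ℤ) * m))) *
            ∑ l' : Fin r, algebraMap F A ((q₁ * q₂) ^ (m * (l' : ℤ))) * b l' m)
          i (-(n : ℤ)) =
      algebraMap F A ((n : F) * (1 - q₁ ^ n) * (1 - q₂ ^ n) *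
        (1 - (q₁ * q₂) ^ (((if i = j then (r : ℤ) else 0) - 1) * (n : ℤ))) /
          (1 - (q₁ * q₂) ^ ((r : ℤ) * (n : ℤ))) *
        (if j < i then (q₁ * q₂) ^ ((r : ℤ) * (n : ℤ)) else 1))) ∧
    (∀ (n : ℤ), n ≠ 0 →
      ∑ i : Fin r, algebraMap F A ((q₁ * q₂) ^ (n * (i : ℤ))) *
        (b i n - algebraMap F A ((1 - (q₁ * q₂) ^ n) / (1 - (q₁ * q₂) ^ ((r : ℤ) * n))) *
          ∑ l' : Fin r, algebraMap F A ((q₁ * q₂) ^ (n * (l' : ℤ))) * b l' n) = 0) :=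
  h_relations_general q₁ q₂ hq0 hgen r hr b hrel
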